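/- Let n, k, q be natural numbers with 1 ≤ k ≤ ⌊n/2⌋ − 1 and n − k ≤ q ≤ n − 1. Then the maximum number of edges of a convex geometric graph on n vertices that contains no k+1 pairwise disjoint edges and admits an independent set of q consecutive boundary vertices equals C(n,2) − C(q,2). -/

import Mathlib

open scoped Classical

/-- `v` lists the vertices of a convex polygon in cyclic order: `v` is injective, the
points are in convex position, and consecutive vertices are joined by edges of the
convex hull boundary. -/
def ConvexCyclic {n : ℕ} (v : ZMod n → ℝ × ℝ) : Prop :=
  Function.Injective v ∧
  (∀ i : ZMod n, v i ∉ convexHull ℝ (v '' {j | j ≠ i})) ∧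
  (∀ i : ZMod n, segment ℝ (v i) (v (i + 1)) ⊆ frontier (convexHull ℝ (Set.range v)))

/-- The closed segment in the plane realizing an edge `e : Sym2 (ZMod n)`. -/
noncomputable def segOf {n : ℕ} (v : ZMod n → ℝ × ℝ) (e : Sym2 (ZMod n)) : Set (ℝ × ℝ) :=
  Sym2.lift ⟨fun i j => segment ℝ (v i) (v j), fun i j => segment_symm ℝ (v i) (v j)⟩ e

/-- The arc of `q` consecutive vertices starting at `a` (as indices in `ZMod n`). -/
noncomputable def arcFrom (n : ℕ) (a : ZMod n) (q : ℕ) : Finset (ZMod n) :=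
  (Finset.range q).image fun i => a + (i : ZMod n)

/-- `E` contains no `k+1` pairwise disjoint edges: no `k+1`-element subset of `E`
consists of edges whose closed segments are pairwise disjoint. -/
def NoDisjointEdges {n : ℕ} (v : ZMod n → ℝ × ℝ) (E : Finset (Sym2 (ZMod n)))
    (k : ℕ) : Prop :=
  ¬ ∃ S ⊆ E, S.card = k + 1 ∧
    (S : Set (Sym2 (ZMod n))).Pairwise fun e f => Disjoint (segOf v e) (segOf v f)


noncomputable def lf (a b : ℝ) : (ℝ × ℝ) →L[ℝ] ℝ :=
  a • (ContinuousLinearMap.fst ℝ ℝ ℝ) + b • (ContinuousLinearMap.snd ℝ ℝ ℝ)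

lemma lf_apply (a b : ℝ) (p : ℝ × ℝ) : lf a b p = a * p.1 + b * p.2 := by
  simp [lf, smul_eq_mul]

lemma lf_ne_zero (a b : ℝ) (hb : b ≠ 0) : lf a b ≠ 0 := by
  intro h
  have := congrArg (fun f : (ℝ × ℝ) →L[ℝ] ℝ => f (0, 1)) h
  simp [lf_apply] at this
  exact hb this

lemma hull_subset_ge {S : Set (ℝ × ℝ)} (f : (ℝ × ℝ) →L[ℝ] ℝ) {c : ℝ}
    (hS : ∀ x ∈ S, c ≤ f x) : convexHull ℝ S ⊆ f ⁻¹' Set.Ici c :=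
  convexHull_min hS ((convex_Ici c).linear_preimage (f : (ℝ × ℝ) →ₗ[ℝ] ℝ))

lemma not_mem_hull_of_lt {S : Set (ℝ × ℝ)} {p : ℝ × ℝ} (f : (ℝ × ℝ) →L[ℝ] ℝ) {c : ℝ}
    (hfp : f p = c) (hS : ∀ x ∈ S, c < f x) : p ∉ convexHull ℝ S := by
  intro h
  have : convexHull ℝ S ⊆ f ⁻¹' Set.Ioi c :=
    convexHull_min hS ((convex_Ioi c).linear_preimage (f : (ℝ × ℝ) →ₗ[ℝ] ℝ))
  have := this h
  rw [Set.mem_preimage, hfp] at this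
  exact lt_irrefl c this

lemma seg_subset_frontier {S : Set (ℝ × ℝ)} (hfin : S.Finite) {p q : ℝ × ℝ}
    (hp : p ∈ S) (hq : q ∈ S) (f : (ℝ × ℝ) →L[ℝ] ℝ) (hf : f ≠ 0) {c : ℝ}
    (hfp : f p = c) (hfq : f q = c) (hS : ∀ x ∈ S, c ≤ f x) :
    segment ℝ p q ⊆ frontier (convexHull ℝ S) := by
  have hcl : IsClosed (convexHull ℝ S) := hfin.isClosed_convexHull (𝕜 := ℝ)
  have hhull := hull_subset_ge f hS
  have hint : interior (convexHull ℝ S) ⊆ f ⁻¹' Set.Ioi c := by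
    have h1 : interior (f ⁻¹' Set.Ici c) = f ⁻¹' Set.Ioi c := by
      rw [← ((f.isOpenMap_of_ne_zero hf).preimage_interior_eq_interior_preimage
        f.continuous (Set.Ici c)), interior_Ici]
    exact h1 ▸ interior_mono hhull
  intro x hx
  have hxhull : x ∈ convexHull ℝ S :=
    (convex_convexHull ℝ S).segment_subset (subset_convexHull ℝ S hp)
      (subset_convexHull ℝ S hq) hx
  have hfx : f x = c := by
    obtain ⟨a, b, ha, hb, hab, rfl⟩ := hx
    simp only [map_add, map_smul, smul_eq_mul, hfp, hfq]
    linear_combination c * hab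
  rw [frontier, hcl.closure_eq]
  exact ⟨hxhull, fun hmem => by have := hint hmem; rw [Set.mem_preimage, hfx] at this; exact lt_irrefl c this⟩




/-- nondiagonal Sym2 elements over a finset -/
lemma mem_nds {α : Type*} [DecidableEq α] {s : Finset α} {e : Sym2 α} :
    e ∈ s.offDiag.image (Function.uncurry Sym2.mk) ↔ ¬ e.IsDiag ∧ ∀ x ∈ e, x ∈ s := by
  induction e using Sym2.ind with
  | _ x y =>
    simp only [Finset.mem_image, Finset.mem_offDiag, Sym2.isDiag_iff_proj_eq, Sym2.mem_iff]
    constructor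
    · rintro ⟨⟨a, b⟩, ⟨ha, hb, hab⟩, h⟩
      rw [Function.uncurry_apply_pair, Sym2.eq_iff] at h
      rcases h with ⟨rfl, rfl⟩ | ⟨rfl, rfl⟩
      · exact ⟨hab, by rintro z (rfl | rfl) <;> assumption⟩
      · exact ⟨fun h => hab h.symm, by rintro z (rfl | rfl) <;> assumption⟩
    · rintro ⟨hxy, h⟩
      exact ⟨(x, y), ⟨h x (Or.inl rfl), h y (Or.inr rfl), hxy⟩, rfl⟩

lemma card_nds {α : Type*} [DecidableEq α] (s : Finset α) :
    (s.offDiag.image (Function.uncurry Sym2.mk)).card = s.card.choose 2 :=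
  Sym2.card_image_offDiag s

lemma mem_segOf {n : ℕ} (v : ZMod n → ℝ × ℝ) {e : Sym2 (ZMod n)} {x : ZMod n}
    (hx : x ∈ e) : v x ∈ segOf v e := by
  induction e using Sym2.ind with
  | _ i j =>
    rw [Sym2.mem_iff] at hx
    have : segOf v s(i, j) = segment ℝ (v i) (v j) := rfl
    rw [this]
    rcases hx with rfl | rfl
    · exact left_mem_segment ℝ _ _
    · exact right_mem_segment ℝ _ _

lemma arcFrom_eq (n : ℕ) (a : ZMod n) (q : ℕ) :
    arcFrom n a q = (Finset.range q).image (fun i : ℕ => a + (Nat.cast i : ZMod n)) := by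
  ext x
  simp only [arcFrom, Finset.mem_image, Finset.bind_def, Finset.mem_sup, Finset.mem_range,
    Finset.pure_def, Finset.mem_singleton]
  constructor
  · rintro ⟨b, ⟨i, hi, rfl⟩, h⟩
    exact ⟨i, hi, h⟩
  · rintro ⟨i, hi, h⟩
    exact ⟨(i : ZMod n), ⟨i, hi, rfl⟩, h⟩

lemma arc_card (n : ℕ) [NeZero n] (a : ZMod n) (q : ℕ) (hq : q ≤ n) :
    (arcFrom n a q).card = q := by
  rw [arcFrom_eq]
  have hinj : Set.InjOn (fun i : ℕ => a + (i : ZMod n)) (Finset.range q) := by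
    intro i hi j hj h
    simp only [Finset.coe_range, Set.mem_Iio] at hi hj
    have h2 : (i : ZMod n) = (j : ZMod n) := add_left_cancel h
    have hiv := ZMod.val_cast_of_lt (lt_of_lt_of_le hi hq)
    have hjv := ZMod.val_cast_of_lt (lt_of_lt_of_le hj hq)
    rw [← hiv, ← hjv, h2]
  rw [Finset.card_image_of_injOn hinj, Finset.card_range]


noncomputable def pv (n : ℕ) : ZMod n → ℝ × ℝ := fun i => ((i.val : ℝ), (i.val : ℝ) ^ 2)

lemma pv_convexCyclic (n : ℕ) [NeZero n] : ConvexCyclic (pv n) := by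
  have hval : ∀ i : ZMod n, ((i.val : ℕ) : ZMod n) = i := fun i => ZMod.natCast_zmod_val i
  have hvinj : Function.Injective (pv n) := by
    intro i j h
    have h1 : (i.val : ℝ) = (j.val : ℝ) := congrArg Prod.fst h
    have h2 : i.val = j.val := Nat.cast_injective h1
    rw [← hval i, ← hval j, h2]
  refine ⟨hvinj, ?_, ?_⟩
  · -- convex position
    intro i
    set t : ℝ := (i.val : ℝ) with ht
    refine not_mem_hull_of_lt (lf (-(2 * t)) 1) (c := -(t ^ 2)) ?_ ?_
    · rw [lf_apply]; show -(2*t) * t + 1 * t ^ 2 = -(t^2); ring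
    · rintro x ⟨j, hj, rfl⟩
      rw [lf_apply]
      show -(t ^ 2) < -(2*t) * (j.val : ℝ) + 1 * (j.val : ℝ) ^ 2
      have hne : (j.val : ℝ) ≠ t := by
        simp only [ht, Ne, Nat.cast_inj]
        intro h
        exact hj (by rw [← hval j, ← hval i, h])
      nlinarith [pow_pos (abs_pos.mpr (sub_ne_zero.mpr hne)) 2, sq_abs ((j.val : ℝ) - t)]
  · -- edges on frontier
    intro i
    have hfin : (Set.range (pv n)).Finite := Set.finite_range _
    have hvlt : ∀ j : ZMod n, j.val < n := fun j => ZMod.val_lt j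
    by_cases hcase : i.val = n - 1
    · -- top edge
      have hn1 : 1 ≤ n := Nat.one_le_iff_ne_zero.mpr (NeZero.ne n)
      have hi0 : ((n - 1 : ℕ) : ZMod n) = i := by rw [← hcase]; exact hval i
      have hi1 : i + 1 = 0 := by
        rw [← hi0]
        rw [show ((n - 1 : ℕ) : ZMod n) + 1 = (((n - 1) + 1 : ℕ) : ZMod n) by push_cast; ring]
        rw [show (n - 1) + 1 = n by omega, ZMod.natCast_self]
      set a : ℝ := ((n - 1 : ℕ) : ℝ) with ha
      have hfp : lf a (-1) (pv n i) = 0 := by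
        rw [lf_apply]; show a * ((i.val : ℕ) : ℝ) + (-1) * ((i.val : ℕ) : ℝ) ^ 2 = 0
        rw [hcase]; ring
      have hfq : lf a (-1) (pv n (i + 1)) = 0 := by
        rw [hi1, lf_apply]
        show a * (((0 : ZMod n).val : ℕ) : ℝ) + (-1) * (((0 : ZMod n).val : ℕ) : ℝ) ^ 2 = 0
        rw [ZMod.val_zero]; simp
      refine seg_subset_frontier hfin ⟨i, rfl⟩ ⟨i + 1, rfl⟩ (lf a (-1))
        (lf_ne_zero a (-1) (by norm_num)) hfp hfq ?_
      rintro x ⟨j, rfl⟩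
      rw [lf_apply]
      show 0 ≤ a * ((j.val : ℕ) : ℝ) + (-1) * ((j.val : ℕ) : ℝ) ^ 2
      have h1 : j.val ≤ n - 1 := by have := hvlt j; omega
      have h2 : ((j.val : ℕ) : ℝ) ≤ a := by rw [ha]; exact_mod_cast h1
      have h3 : (0 : ℝ) ≤ ((j.val : ℕ) : ℝ) := Nat.cast_nonneg _
      nlinarith
    · -- lower edge
      have hi1 : (i + 1).val = i.val + 1 := by
        have hlt : i.val + 1 < n := by have := hvlt i; omega
        have h4 : ((i.val + 1 : ℕ) : ZMod n) = i + 1 := by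
          push_cast
          rw [hval i]
        rw [← h4]
        exact ZMod.val_cast_of_lt hlt
      set a : ℝ := ((i.val : ℕ) : ℝ) with ha
      have hfp : lf (-(2 * a + 1)) 1 (pv n i) = -(a ^ 2) - a := by
        rw [lf_apply]; show -(2*a+1) * a + 1 * a ^ 2 = -(a^2) - a; ring
      have hfq : lf (-(2 * a + 1)) 1 (pv n (i + 1)) = -(a ^ 2) - a := by
        rw [lf_apply]
        show -(2*a+1) * (((i+1).val : ℕ) : ℝ) + 1 * (((i+1).val : ℕ) : ℝ) ^ 2 = -(a^2) - a
        rw [hi1]; push_cast; ring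
      refine seg_subset_frontier hfin ⟨i, rfl⟩ ⟨i + 1, rfl⟩ (lf (-(2 * a + 1)) 1)
        (lf_ne_zero _ 1 one_ne_zero) hfp hfq ?_
      rintro x ⟨j, rfl⟩
      rw [lf_apply]
      show -(a^2) - a ≤ -(2*a+1) * ((j.val : ℕ) : ℝ) + 1 * ((j.val : ℕ) : ℝ) ^ 2
      rcases le_or_gt j.val i.val with h | h
      · have h2 : ((j.val : ℕ) : ℝ) ≤ a := by rw [ha]; exact_mod_cast h
        nlinarith
      · have h2 : a + 1 ≤ ((j.val : ℕ) : ℝ) := by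
          rw [ha]; have : i.val + 1 ≤ j.val := h; exact_mod_cast this
        nlinarith

/-- Theorem 1.3(3): for `1 ≤ k ≤ ⌊n/2⌋ − 1` and `n − k ≤ q ≤ n − 1`, the maximum number
of edges of a convex geometric graph on `n` vertices with no `k+1` pairwise disjoint
edges and admitting an independent arc of `q` consecutive boundary vertices is
`C(n,2) − C(q,2)`. -/
theorem max_edges_q_ge (n k q : ℕ) [NeZero n] (hk1 : 1 ≤ k) (hk2 : k ≤ n / 2 - 1)
    (hq1 : n - k ≤ q) (hq2 : q ≤ n - 1) :
    IsGreatest {N : ℕ | ∃ (v : ZMod n → ℝ × ℝ) (E : Finset (Sym2 (ZMod n))),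
        ConvexCyclic v ∧ (∀ e ∈ E, ¬ e.IsDiag) ∧
        NoDisjointEdges v E k ∧
        (∃ a : ZMod n, ∀ e ∈ E, ¬ ∀ x ∈ e, x ∈ arcFrom n a q) ∧
        E.card = N}
      (n.choose 2 - q.choose 2) := by
  -- basic numeric facts
  have hn4 : 4 ≤ n := by omega
  have hqn : q ≤ n := by omega
  have hnq : n - q ≤ k := by omega
  classical
  set A : Finset (Sym2 (ZMod n)) := (Finset.univ : Finset (ZMod n)).offDiag.image (Function.uncurry Sym2.mk) with hA
  have hAcard : A.card = n.choose 2 := by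
    rw [hA, card_nds, Finset.card_univ, ZMod.card]
  have hBsub : ∀ a : ZMod n, (arcFrom n a q).offDiag.image (Function.uncurry Sym2.mk) ⊆ A := by
    intro a e he
    exact mem_nds.mpr ⟨(mem_nds.mp he).1, fun x _ => Finset.mem_univ x⟩
  have hBcard : ∀ a : ZMod n, ((arcFrom n a q).offDiag.image (Function.uncurry Sym2.mk)).card = q.choose 2 := by
    intro a
    rw [card_nds, arc_card n a q hqn]
  constructor
  · -- membership: the extremal example
    set B : Finset (Sym2 (ZMod n)) := (arcFrom n (0 : ZMod n) q).offDiag.image (Function.uncurry Sym2.mk) with hB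
    refine ⟨pv n, A \ B, pv_convexCyclic n, ?_, ?_, ⟨0, ?_⟩, ?_⟩
    · intro e he
      exact (mem_nds.mp (Finset.mem_sdiff.mp he).1).1
    · -- no k+1 pairwise disjoint edges
      rintro ⟨S, hSE, hScard, hpair⟩
      set C : Finset (ZMod n) := Finset.univ \ arcFrom n (0 : ZMod n) q with hC
      have hCcard : C.card = n - q := by
        rw [hC, Finset.card_sdiff_of_subset (Finset.subset_univ _), Finset.card_univ, ZMod.card,
          arc_card n 0 q hqn]
      have hwit : ∀ e ∈ S, ∃ x, x ∈ e ∧ x ∉ arcFrom n (0 : ZMod n) q := by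
        intro e he
        have heE := hSE he
        rw [Finset.mem_sdiff] at heE
        have hnb := heE.2
        rw [hB, mem_nds] at hnb
        push_neg at hnb
        obtain ⟨x, hx1, hx2⟩ := hnb (mem_nds.mp heE.1).1
        exact ⟨x, hx1, hx2⟩
      set g : Sym2 (ZMod n) → ZMod n := fun e =>
        if h : ∃ x, x ∈ e ∧ x ∉ arcFrom n (0 : ZMod n) q then h.choose else 0 with hg
      have hgmem : ∀ e ∈ S, g e ∈ e ∧ g e ∉ arcFrom n (0 : ZMod n) q := by
        intro e he
        have h := hwit e he
        simp only [hg, dif_pos h]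
        exact h.choose_spec
      have hmap : ∀ e ∈ S, g e ∈ C := by
        intro e he
        rw [hC, Finset.mem_sdiff]
        exact ⟨Finset.mem_univ _, (hgmem e he).2⟩
      have hlt : C.card < S.card := by
        rw [hCcard, hScard]; omega
      obtain ⟨e, he, f, hf, hef, hgef⟩ := Finset.exists_ne_map_eq_of_card_lt_of_maps_to hlt hmap
      have hd := hpair (Finset.mem_coe.mpr he) (Finset.mem_coe.mpr hf) hef
      have h1 : pv n (g e) ∈ segOf (pv n) e := mem_segOf (pv n) (hgmem e he).1
      have h2 : pv n (g e) ∈ segOf (pv n) f := by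
        rw [hgef]; exact mem_segOf (pv n) (hgmem f hf).1
      exact Set.disjoint_left.mp hd h1 h2
    · -- every edge leaves the arc
      intro e he hall
      have heE := Finset.mem_sdiff.mp he
      exact heE.2 (mem_nds.mpr ⟨(mem_nds.mp heE.1).1, hall⟩)
    · rw [Finset.card_sdiff_of_subset (hBsub 0), hAcard, hBcard 0]
  · -- upper bound
    rintro N ⟨v, E, _, hdiag, _, ⟨a, harc⟩, rfl⟩
    have hEsub : E ⊆ A \ (arcFrom n a q).offDiag.image (Function.uncurry Sym2.mk) := by
      intro e he
      rw [Finset.mem_sdiff]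
      refine ⟨mem_nds.mpr ⟨hdiag e he, fun x _ => Finset.mem_univ x⟩, fun hb => ?_⟩
      exact harc e he (mem_nds.mp hb).2
    calc E.card ≤ (A \ (arcFrom n a q).offDiag.image (Function.uncurry Sym2.mk)).card := Finset.card_le_card hEsub
      _ = n.choose 2 - q.choose 2 := by
          rw [Finset.card_sdiff_of_subset (hBsub a), hAcard, hBcard a]
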